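/- Let F be a sensori-computational device and N ⊆ Y(F) such that every nonempty string s1 s2 … sk ∈ L(F) has first symbol s1 ∈ Y(F) \ N. If F is P_N-simulatable (there exists an SCD that output simulates F modulo the N-pump over alphabet Y(F)), then F is π_N-simulatable (there exists an SCD that output simulates F modulo the graph of the N-shrink over alphabet Y(F)). -/

import Mathlib

/-- A sensori-computational device: a finite nonempty set of states `V`,
a nonempty set `V0` of initial states, observations `Y`, a transition
labelling `tr`, and an output function `out` with nonempty values. -/
structure SCD (Y : Type) (C : Type) : Type 1 where
  V : Type
  finV : Fintype V
  V0 : Set V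
  V0_nonempty : V0.Nonempty
  tr : V → V → Set Y
  out : V → Set C
  out_nonempty : ∀ v, (out v).Nonempty

namespace SCD

variable {Y C : Type}

/-- `Traces F v s w`: string `s` reaches state `w` when traced from `v`. -/
inductive Traces (F : SCD Y C) : F.V → List Y → F.V → Prop
  | nil (v : F.V) : Traces F v [] v
  | cons {v w u : F.V} {y : Y} {s : List Y} :
      y ∈ F.tr v w → Traces F w s u → Traces F v (y :: s) u

/-- The set of states reached by `s` from some initial state. -/
def reached (F : SCD Y C) (s : List Y) : Set F.V :=
  {w | ∃ v0 ∈ F.V0, F.Traces v0 s w}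

/-- The (interaction) language of `F`. -/
def lang (F : SCD Y C) : Set (List Y) :=
  {s | (F.reached s).Nonempty}

/-- The set of outputs of all states reached by `s`. -/
def outs (F : SCD Y C) (s : List Y) : Set C :=
  ⋃ v ∈ F.reached s, F.out v

end SCD

/-- `F'` output simulates `F` modulo the relation `R`. -/
def OutSim {A B C : Type} (F : SCD A C) (F' : SCD B C)
    (R : List A → List B → Prop) : Prop :=
  ∀ s ∈ F.lang,
    (∃ t, R s t) ∧ ∀ t, R s t → t ∈ F'.lang ∧ F'.outs t ⊆ F.outs s

/-- `F` is `R`-simulatable: some device output simulates `F` modulo `R`. -/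
def Simulatable {A B C : Type} (F : SCD A C)
    (R : List A → List B → Prop) : Prop :=
  ∃ F' : SCD B C, OutSim F F' R

/-- Composition of relations (on strings), `R ⨟ S`. -/
def relComp {α β γ : Type*} (R : α → β → Prop) (S : β → γ → Prop) :
    α → γ → Prop :=
  fun a c => ∃ b, R a b ∧ S b c
/-- The `N`-pump: the smallest relation with `ε P ε`, `s P s`, and closed
under inserting a symbol `b ∈ N` at any position except before the first
symbol. -/
inductive Pump {A : Type} (N : Set A) : List A → List A → Prop
  | refl (s : List A) : Pump N s s
  | insert {s t1 t2 : List A} {b : A} :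
      b ∈ N → Pump N s (t1 ++ t2) → t1 ≠ [] → Pump N s (t1 ++ b :: t2)

open Classical in
/-- The `N`-shrink: delete all occurrences of symbols in `N`. -/
noncomputable def shrink {A : Type} (N : Set A) : List A → List A
  | [] => []
  | a :: s => if a ∈ N then shrink N s else a :: shrink N s

/-- The `N`-shrink, as a relation (graph of the function). -/
def shrinkRel {A : Type} (N : Set A) : List A → List A → Prop :=
  fun s t => t = shrink N s

/-!
A `π_N`-simulator may output on `t` only outputs common to all `C(F, s)` with `π_N(s) = t`.
For `N`-free `t` these are governed by the family of reach-sets `V(F, s)` of such `s ∈ L(F)`,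
and this finite family evolves deterministically with `t`, which yields a finite simulator.
The intersection of the output sets is nonempty: finitely many strings `s₁, …, sₖ` realise
all reach-sets, and since they start outside `N` and have the same shrink, `N`-insertions after
the first symbol merge them into one common `P_N`-image `u`; every output of the
`P_N`-simulator at `u` then lies in each `C(F, sᵢ)`.
-/

section Shrink

variable {A : Type} {N : Set A}

open Classical in
theorem shrink_eq_filter (N : Set A) (s : List A) :
    shrink N s = s.filter fun a => decide (a ∉ N) := by
  induction s with
  | nil => rfl
  | cons a s ih => by_cases ha : a ∈ N <;> simp [shrink, ha, ih]

theorem shrink_cons_of_mem {a : A} (ha : a ∈ N) (s : List A) :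
    shrink N (a :: s) = shrink N s := by
  simp [shrink, ha]

theorem shrink_cons_of_notMem {a : A} (ha : a ∉ N) (s : List A) :
    shrink N (a :: s) = a :: shrink N s := by
  simp [shrink, ha]

theorem shrink_append (s t : List A) : shrink N (s ++ t) = shrink N s ++ shrink N t := by
  simp only [shrink_eq_filter, List.filter_append]

theorem shrink_eq_nil_iff {s : List A} : shrink N s = [] ↔ ∀ a ∈ s, a ∈ N := by
  simp [shrink_eq_filter]

theorem notMem_of_mem_shrink {s : List A} {a : A} (h : a ∈ shrink N s) : a ∉ N := by
  simp only [shrink_eq_filter, List.mem_filter] at h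
  simpa using h.2

theorem exists_eq_append_cons_of_shrink_eq_concat {s t : List A} {a : A}
    (h : shrink N s = t ++ [a]) :
    ∃ p w, s = p ++ a :: w ∧ shrink N p = t ∧ ∀ b ∈ w, b ∈ N := by
  rw [shrink_eq_filter, List.filter_eq_append_iff] at h
  obtain ⟨l₁, l₂, rfl, hl₁, hl₂⟩ := h
  obtain ⟨m₁, m₂, rfl, hm₁, -, hm₂⟩ := List.filter_eq_cons_iff.1 hl₂
  refine ⟨l₁ ++ m₁, m₂, by simp, ?_, ?_⟩
  · rw [shrink_append, shrink_eq_filter, hl₁, shrink_eq_nil_iff.2 (by simpa using hm₁),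
      List.append_nil]
  · simpa using List.filter_eq_nil_iff.1 hm₂

def HeadNotIn (N : Set A) (s : List A) : Prop :=
  ∀ a, s.head? = some a → a ∉ N

theorem HeadNotIn.head?_eq {s : List A} (hs : HeadNotIn N s) :
    s.head? = (shrink N s).head? := by
  cases s with
  | nil => rfl
  | cons a s => rw [shrink_cons_of_notMem (hs a rfl)]; rfl

end Shrink

section Pump

variable {A : Type} {N : Set A}

/-- Insertions of symbols of `N` at arbitrary positions, unlike `Pump` also at the front. -/
inductive Inserts (N : Set A) : List A → List A → Prop
  | nil : Inserts N [] []
  | keep (a : A) {s u : List A} : Inserts N s u → Inserts N (a :: s) (a :: u)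
  | insert {b : A} {s u : List A} : b ∈ N → Inserts N s u → Inserts N s (b :: u)

theorem Inserts.refl : ∀ s : List A, Inserts N s s
  | [] => .nil
  | a :: s => .keep a (Inserts.refl s)

theorem Inserts.nil_of_forall_mem : ∀ {u : List A}, (∀ b ∈ u, b ∈ N) → Inserts N [] u
  | [], _ => .nil
  | _ :: _, h => .insert (h _ (by simp)) (nil_of_forall_mem fun c hc => h c (by simp [hc]))

theorem Inserts.exists_common : ∀ {s s' : List A}, shrink N s = shrink N s' →
    ∃ u, Inserts N s u ∧ Inserts N s' u
  | [], s', h => ⟨s', nil_of_forall_mem (shrink_eq_nil_iff.1 h.symm), .refl s'⟩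
  | a :: s, [], h => ⟨a :: s, .refl _, nil_of_forall_mem (shrink_eq_nil_iff.1 h)⟩
  | a :: s, b :: s', h => by
    by_cases ha : a ∈ N
    · rw [shrink_cons_of_mem ha] at h
      obtain ⟨u, hs, hs'⟩ := exists_common (s := s) (s' := b :: s') h
      exact ⟨a :: u, .keep a hs, .insert ha hs'⟩
    by_cases hb : b ∈ N
    · rw [shrink_cons_of_mem hb] at h
      obtain ⟨u, hs, hs'⟩ := exists_common (s := a :: s) (s' := s') h
      exact ⟨b :: u, .insert hb hs, .keep b hs'⟩
    rw [shrink_cons_of_notMem ha, shrink_cons_of_notMem hb, List.cons.injEq] at h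
    obtain ⟨rfl, h⟩ := h
    obtain ⟨u, hs, hs'⟩ := exists_common h
    exact ⟨a :: u, .keep a hs, .keep a hs'⟩
termination_by s s' => s.length + s'.length

theorem Inserts.pump_append {s u : List A} (h : Inserts N s u) :
    ∀ {x : List A}, x ≠ [] → Pump N (x ++ s) (x ++ u) := by
  induction h with
  | nil => exact fun _ => .refl _
  | @keep a s u _ ih => exact fun _ => by simpa using ih (x := _ ++ [a]) (by simp)
  | insert hb _ ih => exact fun hx => .insert hb (ih hx) hx

theorem Pump.trans {s u w : List A} (h₁ : Pump N s u) (h₂ : Pump N u w) : Pump N s w := by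
  induction h₂ with
  | refl => exact h₁
  | insert hb _ hne ih => exact .insert hb ih hne

theorem Pump.shrink_eq {s u : List A} (h : Pump N s u) : shrink N u = shrink N s := by
  induction h with
  | refl => rfl
  | insert hb _ _ ih => rw [shrink_append, shrink_cons_of_mem hb, ← shrink_append, ih]

theorem Pump.head?_eq {s u : List A} (h : Pump N s u) : u.head? = s.head? := by
  induction h with
  | refl => rfl
  | @insert t₁ _ _ _ _ hne ih =>
    obtain ⟨x, t₁, rfl⟩ := List.exists_cons_of_ne_nil hne
    simpa using ih

theorem Pump.exists_common {p q : List A} (hp : HeadNotIn N p) (hq : HeadNotIn N q)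
    (h : shrink N p = shrink N q) : ∃ u, Pump N p u ∧ Pump N q u := by
  have hhead : p.head? = q.head? := by rw [hp.head?_eq, hq.head?_eq, h]
  match p, q, hhead with
  | [], [], _ => exact ⟨[], .refl _, .refl _⟩
  | a :: p, _ :: q, hhead =>
    obtain rfl : a = _ := Option.some.inj hhead
    rw [shrink_cons_of_notMem (hp a rfl), shrink_cons_of_notMem (hp a rfl),
      List.cons.injEq] at h
    obtain ⟨u, hpu, hqu⟩ := Inserts.exists_common h.2
    exact ⟨a :: u, hpu.pump_append (x := [a]) (by simp), hqu.pump_append (x := [a]) (by simp)⟩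

theorem Pump.exists_common_of_finset {s : List A} (hs : HeadNotIn N s) (S : Finset (List A))
    (hS : ∀ p ∈ S, HeadNotIn N p ∧ shrink N p = shrink N s) :
    ∃ u, Pump N s u ∧ ∀ p ∈ S, Pump N p u := by
  classical
  induction S using Finset.induction_on with
  | empty => exact ⟨s, .refl s, by simp⟩
  | insert p S _ ih =>
    obtain ⟨u, hsu, hSu⟩ := ih fun q hq => hS q (Finset.mem_insert_of_mem hq)
    obtain ⟨hp, hps⟩ := hS p (Finset.mem_insert_self p S)
    have hu : HeadNotIn N u := fun a ha => hs a (hsu.head?_eq ▸ ha)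
    obtain ⟨v, hpv, huv⟩ := Pump.exists_common hp hu (by rw [hps, hsu.shrink_eq])
    refine ⟨v, hsu.trans huv, fun q hq => ?_⟩
    rcases Finset.mem_insert.1 hq with rfl | hq
    · exact hpv
    · exact (hSu q hq).trans huv

end Pump

namespace SCD

variable {Y C : Type} (F : SCD Y C)

def post (s : List Y) (A : Set F.V) : Set F.V :=
  {w | ∃ v ∈ A, F.Traces v s w}

def outputsOf (B : Set F.V) : Set C :=
  ⋃ v ∈ B, F.out v

variable {F}

theorem reached_eq_post (s : List Y) : F.reached s = F.post s F.V0 := rfl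

theorem traces_append_iff {s t : List Y} {v w : F.V} :
    F.Traces v (s ++ t) w ↔ ∃ u, F.Traces v s u ∧ F.Traces u t w := by
  induction s generalizing v with
  | nil => exact ⟨fun h => ⟨v, .nil v, h⟩, fun ⟨_, .nil _, h⟩ => h⟩
  | cons y s ih =>
    constructor
    · rintro (_ | ⟨hy, h⟩)
      obtain ⟨u, hs, ht⟩ := ih.1 h
      exact ⟨u, .cons hy hs, ht⟩
    · rintro ⟨u, hs, ht⟩
      cases hs with
      | cons hy hs => exact .cons hy (ih.2 ⟨u, hs, ht⟩)

theorem post_append (s t : List Y) (A : Set F.V) :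
    F.post (s ++ t) A = F.post t (F.post s A) := by
  ext w
  simp only [post, traces_append_iff]
  aesop

@[simp] theorem post_nil (A : Set F.V) : F.post [] A = A := by
  ext w
  exact ⟨fun ⟨_, hv, h⟩ => by cases h; exact hv, fun hw => ⟨w, hw, .nil w⟩⟩

theorem nil_mem_lang : [] ∈ F.lang := by
  simpa [lang, reached_eq_post] using F.V0_nonempty

theorem nonempty_of_post_nonempty {s : List Y} {A : Set F.V} (h : (F.post s A).Nonempty) :
    A.Nonempty :=
  let ⟨_, v, hv, _⟩ := h
  ⟨v, hv⟩

end SCD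

section ShrinkDevice

variable {Y C : Type} (F : SCD Y C) (N : Set Y)

def reachSets (t : List Y) : Set (Set F.V) :=
  F.reached '' {s | s ∈ F.lang ∧ shrink N s = t}

/-- The family of reach-sets after appending `y` to the shrunk string: in the original string
`y` may be followed by any `N`-word, and only strings of `L(F)` (nonempty reach-sets) count. -/
def nextReachSets (y : Y) (R : Set (Set F.V)) : Set (Set F.V) :=
  {B | B.Nonempty ∧ ∃ A ∈ R, ∃ w : List Y, (∀ b ∈ w, b ∈ N) ∧ B = F.post (y :: w) A}

variable {F N}

theorem reachSets_nil (hfirst : ∀ s ∈ F.lang, HeadNotIn N s) :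
    reachSets F N [] = {F.V0} := by
  refine Set.eq_singleton_iff_unique_mem.2
    ⟨⟨[], ⟨SCD.nil_mem_lang, rfl⟩, by simp [SCD.reached_eq_post]⟩, ?_⟩
  rintro _ ⟨_ | ⟨a, s⟩, ⟨hs, hshrink⟩, rfl⟩
  · simp [SCD.reached_eq_post]
  · simp [shrink_cons_of_notMem (hfirst _ hs a rfl)] at hshrink

theorem nextReachSets_reachSets {a : Y} (ha : a ∉ N) (t : List Y) :
    nextReachSets F N a (reachSets F N t) = reachSets F N (t ++ [a]) := by
  ext B
  constructor
  · rintro ⟨hB, _, ⟨p, ⟨-, hp⟩, rfl⟩, w, hw, rfl⟩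
    rw [SCD.reached_eq_post, ← SCD.post_append] at hB ⊢
    refine ⟨p ++ a :: w, ⟨hB, ?_⟩, rfl⟩
    rw [shrink_append, shrink_cons_of_notMem ha, shrink_eq_nil_iff.2 hw, hp]
  · rintro ⟨s, ⟨hs, hshrink⟩, rfl⟩
    obtain ⟨p, w, rfl, hp, hw⟩ := exists_eq_append_cons_of_shrink_eq_concat hshrink
    have hpost : F.reached (p ++ a :: w) = F.post (a :: w) (F.reached p) := by
      rw [SCD.reached_eq_post, SCD.post_append]; rfl
    have hne : (F.post (a :: w) (F.reached p)).Nonempty := hpost ▸ hs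
    rw [hpost]
    exact ⟨hne, _, ⟨p, ⟨SCD.nonempty_of_post_nonempty hne, hp⟩, rfl⟩, w, hw, rfl⟩

theorem foldl_nextReachSets (hfirst : ∀ s ∈ F.lang, HeadNotIn N s) {t : List Y}
    (ht : ∀ y ∈ t, y ∉ N) :
    t.foldl (fun R y => nextReachSets F N y R) {F.V0} = reachSets F N t := by
  induction t using List.reverseRecOn with
  | nil => exact (reachSets_nil hfirst).symm
  | append_singleton t a ih =>
    rw [List.foldl_append, ih fun y hy => ht y (by simp [hy]), List.foldl_cons, List.foldl_nil,
      nextReachSets_reachSets (ht a (by simp))]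

variable (F N) in
/-- The `π_N`-simulator: a deterministic device on families of reach-sets, which outputs the
outputs common to all sets of the current family (and anything, should there be none). -/
noncomputable abbrev shrinkDevice : SCD Y C where
  V := Set (Set F.V)
  finV := haveI := F.finV; Fintype.ofFinite _
  V0 := {{F.V0}}
  V0_nonempty := Set.singleton_nonempty _
  tr R R' := {y | R' = nextReachSets F N y R}
  out R := open Classical in
    if (⋂ B ∈ R, F.outputsOf B).Nonempty then ⋂ B ∈ R, F.outputsOf B else Set.univ
  out_nonempty R := by
    split_ifs with h
    · exact h
    · exact ⟨_, Set.mem_univ (F.out_nonempty F.V0_nonempty.some).some⟩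

theorem shrinkDevice_traces_iff {t : List Y} {R R' : (shrinkDevice F N).V} :
    (shrinkDevice F N).Traces R t R' ↔ R' = t.foldl (fun R y => nextReachSets F N y R) R := by
  induction t generalizing R with
  | nil =>
    constructor
    · rintro ⟨⟩
      rfl
    · rintro rfl
      exact .nil _
  | cons y t ih =>
    constructor
    · rintro (_ | ⟨rfl, h⟩)
      exact ih.1 h
    · exact fun h => .cons rfl (ih.2 h)

theorem shrinkDevice_reached_shrink (hfirst : ∀ s ∈ F.lang, HeadNotIn N s) (s : List Y) :
    (shrinkDevice F N).reached (shrink N s) = {reachSets F N (shrink N s)} := by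
  rw [← foldl_nextReachSets hfirst fun _ => notMem_of_mem_shrink]
  ext R
  simp [SCD.reached, shrinkDevice_traces_iff]

theorem exists_forall_mem_outputsOf_reachSets {F' : SCD Y C}
    (hfirst : ∀ s ∈ F.lang, HeadNotIn N s) (hsim : OutSim F F' (Pump N))
    {s : List Y} (hs : s ∈ F.lang) :
    ∃ c, ∀ B ∈ reachSets F N (shrink N s), c ∈ F.outputsOf B := by
  classical
  have := F.finV
  obtain ⟨S, hS, hSimage⟩ := Finset.subset_set_image_iff.1
    (Set.toFinite (reachSets F N (shrink N s))).coe_toFinset.subset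
  obtain ⟨u, hsu, hSu⟩ := Pump.exists_common_of_finset (hfirst s hs) S
    fun p hp => ⟨hfirst p (hS hp).1, (hS hp).2⟩
  obtain ⟨v, hv⟩ := ((hsim s hs).2 u hsu).1
  obtain ⟨c, hc⟩ := F'.out_nonempty v
  refine ⟨c, fun B hB => ?_⟩
  rw [← Set.Finite.mem_toFinset (Set.toFinite _), ← hSimage, Finset.mem_image] at hB
  obtain ⟨p, hp, rfl⟩ := hB
  exact ((hsim p (hS hp).1).2 u (hSu p hp)).2 (Set.mem_biUnion hv hc)

end ShrinkDevice

/-- if every nonempty string of `L(F)` starts with a symbol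
outside `N`, then `F` being `P_N`-simulatable implies `F` is
`π_N`-simulatable. -/
theorem stmt12 {Y C : Type} (F : SCD Y C) (N : Set Y)
    (hfirst : ∀ s ∈ F.lang, ∀ a : Y, s.head? = some a → a ∉ N)
    (h : Simulatable F (Pump N)) :
    Simulatable F (shrinkRel N) := by
  obtain ⟨F', hsim⟩ := h
  refine ⟨shrinkDevice F N, fun s hs => ⟨⟨_, rfl⟩, ?_⟩⟩
  rintro t rfl
  have hreached := shrinkDevice_reached_shrink hfirst s
  obtain ⟨c, hc⟩ := exists_forall_mem_outputsOf_reachSets hfirst hsim hs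
  have hout : (shrinkDevice F N).out (reachSets F N (shrink N s)) =
      ⋂ B ∈ reachSets F N (shrink N s), F.outputsOf B :=
    if_pos ⟨c, Set.mem_iInter₂.2 hc⟩
  refine ⟨by simp [SCD.lang, hreached], ?_⟩
  rw [SCD.outs, hreached, Set.biUnion_singleton, hout]
  exact Set.biInter_subset_of_mem ⟨s, ⟨hs, rfl⟩, rfl⟩
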